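/- arXiv:2601.11618 — 2 statements merged into one kernel-verified Lean document; each statement's English description precedes it below -/
import Mathlib

section
/- Let X and Y be finite types, A ⊆ X × Y, and let K : X → Y → ℝ satisfy K(x,y) > 0 for (x,y) ∈ A and K(x,y) = 0 otherwise. Let a : X → ℝ and b : Y → ℝ be strictly positive, and define K'(x,y) := a(x)·K(x,y)·b(y) for (x,y) ∈ A and K'(x,y) := 0 otherwise. Let μ_out : X → ℝ and μ_in : Y → ℝ, and let Π : X → Y → ℝ be nonnegative, supported in A, with row sums Σ_y Π(x,y) = μ_out(x) for all x and column sums Σ_x Π(x,y) = μ_in(y) for all y. Then, with the convention 0·log(0/t) = 0, the generalized KL divergences satisfy Σ_{x,y} (Π(x,y)·log(Π(x,y)/K'(x,y)) − Π(x,y) + K'(x,y)) = Σ_{x,y} (Π(x,y)·log(Π(x,y)/K(x,y)) − Π(x,y) + K(x,y)) − Σ_x μ_out(x)·log a(x) − Σ_y μ_in(y)·log b(y) + Σ_{x,y} (K'(x,y) − K(x,y)). In particular, the last three terms are independent of Π, so the minimizers of Π ↦ KL(Π‖K') over couplings with the fixed marginals coincide with the minimizers of Π ↦ KL(Π‖K).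 -/
open Finset

/-- Generalized KL divergence of finite arrays, with Lean's conventions
(`0 * log (0 / t) = 0` holds automatically since `log 0 = 0` and `0 * x = 0`). -/
noncomputable def genKL {X Y : Type*} [Fintype X] [Fintype Y]
    (P K : X → Y → ℝ) : ℝ :=
  ∑ x, ∑ y, (P x y * Real.log (P x y / K x y) - P x y + K x y)

/-- A balanced transport plan: nonnegative, supported in `A`, with prescribed marginals. -/
def IsCoupling {X Y : Type*} [Fintype X] [Fintype Y]
    (A : Set (X × Y)) (μout : X → ℝ) (μin : Y → ℝ) (P : X → Y → ℝ) : Prop :=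
  (∀ x y, 0 ≤ P x y) ∧ (∀ x y, (x, y) ∉ A → P x y = 0) ∧
    (∀ x, ∑ y, P x y = μout x) ∧ (∀ y, ∑ x, P x y = μin y)

/-- **Balanced entropic anchors are invariant under kernel scalings.**
If `K' = a ⊗ K ⊗ b` on the allowed set `A` (positive row/column scalings), then for every
coupling `Π` with fixed marginals `(μout, μin)` supported in `A`,
`KL(Π‖K') = KL(Π‖K) − Σ μout·log a − Σ μin·log b + Σ (K' − K)`;
the last three terms are independent of `Π`, so the minimizers over such couplings coincide. -/
theorem genKL_scaling_identity_and_argmin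
    {X Y : Type*} [Fintype X] [Fintype Y]
    (A : Set (X × Y)) (K K' : X → Y → ℝ)
    (hKpos : ∀ x y, (x, y) ∈ A → 0 < K x y)
    (hKzero : ∀ x y, (x, y) ∉ A → K x y = 0)
    (a : X → ℝ) (b : Y → ℝ) (ha : ∀ x, 0 < a x) (hb : ∀ y, 0 < b y)
    (hK' : ∀ x y, (x, y) ∈ A → K' x y = a x * K x y * b y)
    (hK'zero : ∀ x y, (x, y) ∉ A → K' x y = 0)
    (μout : X → ℝ) (μin : Y → ℝ) :
    (∀ P : X → Y → ℝ, IsCoupling A μout μin P →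
      genKL P K'
        = genKL P K - (∑ x, μout x * Real.log (a x)) - (∑ y, μin y * Real.log (b y))
            + ∑ x, ∑ y, (K' x y - K x y)) ∧
    (∀ P₀ : X → Y → ℝ, IsCoupling A μout μin P₀ →
      ((∀ P, IsCoupling A μout μin P → genKL P₀ K' ≤ genKL P K') ↔
        (∀ P, IsCoupling A μout μin P → genKL P₀ K ≤ genKL P K))) := by

  have key : ∀ P : X → Y → ℝ, IsCoupling A μout μin P →
      genKL P K'
        = genKL P K - (∑ x, μout x * Real.log (a x)) - (∑ y, μin y * Real.log (b y))
            + ∑ x, ∑ y, (K' x y - K x y) := by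
    intro P hP
    obtain ⟨hPnn, hPsupp, hrow, hcol⟩ := hP
    have hterm : ∀ x y, P x y * Real.log (P x y / K' x y) - P x y + K' x y
        = (P x y * Real.log (P x y / K x y) - P x y + K x y)
          - P x y * Real.log (a x) - P x y * Real.log (b y) + (K' x y - K x y) := by
      intro x y
      by_cases hA : (x, y) ∈ A
      · rcases eq_or_lt_of_le (hPnn x y) with h0 | hpos
        · rw [← h0]; ring_nf
        · have hK := hKpos x y hA
          have hane := (ha x).ne'
          have hbne := (hb y).ne'
          have hKne := hK.ne'
          have hPne := hpos.ne'
          rw [hK' x y hA,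
            show P x y / (a x * K x y * b y) = P x y / K x y / a x / b y from by ring,
            Real.log_div (by positivity) hbne,
            Real.log_div (by positivity) hane,
            Real.log_div hPne hKne]
          ring
      · rw [hPsupp x y hA, hKzero x y hA, hK'zero x y hA]; simp
    have h1 : ∑ x, ∑ y, P x y * Real.log (a x) = ∑ x, μout x * Real.log (a x) := by
      refine Finset.sum_congr rfl fun x _ => ?_
      rw [← Finset.sum_mul, hrow x]
    have h2 : ∑ x, ∑ y, P x y * Real.log (b y) = ∑ y, μin y * Real.log (b y) := by
      rw [Finset.sum_comm]
      refine Finset.sum_congr rfl fun y _ => ?_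
      rw [← Finset.sum_mul, hcol y]
    unfold genKL
    simp_rw [hterm]
    rw [← h1, ← h2]
    simp only [Finset.sum_add_distrib, Finset.sum_sub_distrib]
  refine ⟨key, fun P₀ hP₀ => ?_⟩
  constructor
  · intro h P hP
    have := h P hP
    rw [key P₀ hP₀, key P hP] at this
    linarith
  · intro h P hP
    have := h P hP
    rw [key P₀ hP₀, key P hP]
    linarith
end

section
/- Let X and Y be finite types, A : Matrix X Y ℝ, and r : ℕ. Then there exist maps q : X → (Fin r → ℝ) and k : Y → (Fin r → ℝ) such that, for the matrix M defined by M(x,y) := Σ_{i < r} q(x)(i)·k(y)(i) (the dot product of q(x) and k(y)), we have rank(M) ≤ r and for every matrix B : Matrix X Y ℝ with rank(B) ≤ r, the Frobenius norm satisfies ‖A − M‖_F ≤ ‖A − B‖_F. -/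
open Finset

/-!
Minimise the Frobenius distance from `A` to the dot-product matrix `(q x ⬝ᵥ k y)` over maps
`q`, `k` into `ℝ^r` with entries bounded by `1` and `2 ‖A‖` respectively; this is a compact set,
so a minimiser exists. It beats every `B` of rank `≤ r`: if `‖B‖ > 2 ‖A‖` then already `0` does
better than `B`, and otherwise `B` is itself attained in the compact set, by writing its columns
in an orthonormal basis of its column space (padded by zeros to dimension `r`).
-/

open Matrix
open scoped RealInnerProductSpace

-- Matrices carry the Frobenius norm, while the factor maps `X → Fin r → ℝ` keep the sup norm.
attribute [local instance] Matrix.frobeniusNormedAddCommGroup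

theorem Fin.append_zero_dotProduct_append_zero {R : Type*} [NonUnitalNonAssocSemiring R]
    {d e : ℕ} (u v : Fin d → R) : Fin.append u (0 : Fin e → R) ⬝ᵥ Fin.append v 0 = u ⬝ᵥ v := by
  simp [dotProduct, Fin.sum_univ_add]

theorem Fin.norm_append_zero_le {E : Type*} [SeminormedAddCommGroup E] {d e : ℕ}
    (u : Fin d → E) : ‖Fin.append u (0 : Fin e → E)‖ ≤ ‖u‖ := by
  refine (pi_norm_le_iff_of_nonneg (norm_nonneg _)).2 fun i => ?_
  refine Fin.addCases (fun j => ?_) (fun j => ?_) i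
  · simpa using norm_le_pi_norm u j
  · simp

theorem Fin.norm_comp_append_zero_le {Z E : Type*} [Fintype Z] [SeminormedAddCommGroup E]
    {d e : ℕ} (v : Z → Fin d → E) : ‖fun z => Fin.append (v z) (0 : Fin e → E)‖ ≤ ‖v‖ :=
  (pi_norm_le_iff_of_nonneg (norm_nonneg v)).2 fun z =>
    (Fin.norm_append_zero_le _).trans (norm_le_pi_norm v z)

namespace Matrix

variable {X Y : Type*} [Fintype Y]

def colSpace (B : Matrix X Y ℝ) : Submodule ℝ (EuclideanSpace ℝ X) :=
  Submodule.span ℝ (Set.range fun y => WithLp.toLp 2 (B.col y))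

theorem rank_of_dotProduct_le {r : ℕ} (q : X → Fin r → ℝ) (k : Y → Fin r → ℝ) :
    (of fun x y => q x ⬝ᵥ k y).rank ≤ r := by
  have : (of fun x y => q x ⬝ᵥ k y) = of q * (of k)ᵀ := by
    ext x y
    simp [mul_apply, dotProduct]
  rw [this]
  exact (rank_mul_le_right _ _).trans ((rank_le_card_height _).trans (Fintype.card_fin r).le)

theorem finrank_colSpace (B : Matrix X Y ℝ) : Module.finrank ℝ B.colSpace = B.rank := by
  let e : (X → ℝ) ≃ₗ[ℝ] EuclideanSpace ℝ X := (EuclideanSpace.equiv X ℝ).symm.toLinearEquiv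
  have : B.colSpace = (Submodule.span ℝ (Set.range B.col)).map (e : (X → ℝ) →ₗ[ℝ] _) := by
    rw [Submodule.map_span, ← Set.range_comp]
    rfl
  rw [this, LinearEquiv.finrank_map_eq, rank_eq_finrank_span_cols]

variable [Fintype X]

theorem frobenius_norm_eq_sqrt (A : Matrix X Y ℝ) : ‖A‖ = √(∑ x, ∑ y, A x y ^ 2) := by
  simp [frobenius_norm_def, Real.sqrt_eq_rpow]

theorem norm_toLp_col_le_frobenius_norm (B : Matrix X Y ℝ) (y : Y) :
    ‖WithLp.toLp 2 (B.col y)‖ ≤ ‖B‖ := by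
  rw [EuclideanSpace.norm_eq, frobenius_norm_eq_sqrt]
  refine Real.sqrt_le_sqrt (sum_le_sum fun x _ => ?_)
  simpa using single_le_sum (f := fun y' => B x y' ^ 2) (fun _ _ => sq_nonneg _) (mem_univ y)

theorem exists_dotProduct_eq_rank (B : Matrix X Y ℝ) :
    ∃ (q : X → Fin B.rank → ℝ) (k : Y → Fin B.rank → ℝ),
      (of fun x y => q x ⬝ᵥ k y) = B ∧ ‖q‖ ≤ 1 ∧ ‖k‖ ≤ ‖B‖ := by
  let b := (stdOrthonormalBasis ℝ B.colSpace).reindex (finCongr B.finrank_colSpace)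
  have hb (j) : ‖(b j : EuclideanSpace ℝ X)‖ = 1 := b.orthonormal.1 j
  refine ⟨fun x j => (b j : EuclideanSpace ℝ X) x,
    fun y j => ⟪(b j : EuclideanSpace ℝ X), WithLp.toLp 2 (B.col y)⟫, ?_, ?_, ?_⟩
  · ext x y
    have hcol := b.sum_repr' ⟨_, Submodule.subset_span (Set.mem_range_self y)⟩
    simpa [dotProduct, mul_comm] using
      congrArg (fun w : B.colSpace => (w : EuclideanSpace ℝ X) x) hcol
  · refine pi_norm_le_iff_of_nonneg zero_le_one |>.2 fun x =>
      pi_norm_le_iff_of_nonneg zero_le_one |>.2 fun j => ?_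
    simpa [hb] using PiLp.norm_apply_le (b j : EuclideanSpace ℝ X) x
  · refine pi_norm_le_iff_of_nonneg (norm_nonneg _) |>.2 fun y =>
      pi_norm_le_iff_of_nonneg (norm_nonneg _) |>.2 fun j => ?_
    calc ‖⟪(b j : EuclideanSpace ℝ X), WithLp.toLp 2 (B.col y)⟫‖
        ≤ ‖(b j : EuclideanSpace ℝ X)‖ * ‖WithLp.toLp 2 (B.col y)‖ := norm_inner_le_norm _ _
      _ ≤ ‖B‖ := by
        rw [hb, one_mul]
        exact B.norm_toLp_col_le_frobenius_norm y

theorem exists_dotProduct_eq_of_rank_le (B : Matrix X Y ℝ) {r : ℕ} (hr : B.rank ≤ r) :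
    ∃ (q : X → Fin r → ℝ) (k : Y → Fin r → ℝ),
      (of fun x y => q x ⬝ᵥ k y) = B ∧ ‖q‖ ≤ 1 ∧ ‖k‖ ≤ ‖B‖ := by
  obtain ⟨q, k, hqk, hq, hk⟩ := B.exists_dotProduct_eq_rank
  obtain ⟨e, rfl⟩ := Nat.exists_eq_add_of_le hr
  refine ⟨fun x => Fin.append (q x) 0, fun y => Fin.append (k y) 0, ?_,
    (Fin.norm_comp_append_zero_le q).trans hq, (Fin.norm_comp_append_zero_le k).trans hk⟩
  simpa only [Fin.append_zero_dotProduct_append_zero] using hqk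

theorem exists_dotProduct_forall_rank_le_norm_sub_le (A : Matrix X Y ℝ) (r : ℕ) :
    ∃ (q : X → Fin r → ℝ) (k : Y → Fin r → ℝ), ∀ B : Matrix X Y ℝ, B.rank ≤ r →
      ‖A - of fun x y => q x ⬝ᵥ k y‖ ≤ ‖A - B‖ := by
  let K := Metric.closedBall (0 : X → Fin r → ℝ) 1 ×ˢ
    Metric.closedBall (0 : Y → Fin r → ℝ) (2 * ‖A‖)
  have hK : IsCompact K := (isCompact_closedBall _ _).prod (isCompact_closedBall _ _)
  have h0 : (0, 0) ∈ K := by simp [K]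
  obtain ⟨⟨q, k⟩, -, hmin⟩ := hK.exists_isMinOn ⟨_, h0⟩
    (f := fun p => ‖A - of fun x y => p.1 x ⬝ᵥ p.2 y‖) (by fun_prop)
  rw [isMinOn_iff] at hmin
  refine ⟨q, k, fun B hB => ?_⟩
  by_cases hBA : ‖B‖ ≤ 2 * ‖A‖
  · obtain ⟨q', k', hqk', hq', hk'⟩ := B.exists_dotProduct_eq_of_rank_le hB
    have hK' : (q', k') ∈ K := by simpa [K] using ⟨hq', hk'.trans hBA⟩
    simpa only [hqk'] using hmin _ hK'
  · calc ‖A - of fun x y => q x ⬝ᵥ k y‖ ≤ ‖A‖ :=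
          (hmin _ h0).trans_eq (congrArg norm (by ext; simp))
      _ ≤ ‖B‖ - ‖A‖ := by linarith
      _ ≤ ‖A - B‖ := by
        rw [norm_sub_rev]
        exact norm_sub_norm_le B A

end Matrix

theorem eckart_young_dot_product_form_general
    {X Y : Type*} [Fintype X] [Fintype Y]
    (A : Matrix X Y ℝ) (r : ℕ) :
    ∃ (q : X → Fin r → ℝ) (k : Y → Fin r → ℝ),
      (Matrix.of fun x y => ∑ i, q x i * k y i).rank ≤ r ∧
      ∀ B : Matrix X Y ℝ, B.rank ≤ r →
        Real.sqrt (∑ x, ∑ y, (A x y - ∑ i, q x i * k y i) ^ 2)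
          ≤ Real.sqrt (∑ x, ∑ y, (A x y - B x y) ^ 2) := by
  obtain ⟨q, k, hqk⟩ := A.exists_dotProduct_forall_rank_le_norm_sub_le r
  refine ⟨q, k, rank_of_dotProduct_le q k, fun B hB => ?_⟩
  simpa [frobenius_norm_eq_sqrt, dotProduct] using hqk B hB

/-- **Optimal dot-product form via SVD (Eckart–Young–Mirsky, Frobenius norm).**
For any real matrix `A` and any rank budget `r`, there exist query/key maps
`q : X → ℝ^r` and `k : Y → ℝ^r` such that the dot-product matrix
`M x y = Σ_i q x i * k y i` has rank at most `r` and is a Frobenius-optimal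
rank-`r` approximation of `A`. -/
theorem eckart_young_dot_product_form
    {X Y : Type*} [Fintype X] [Fintype Y] [DecidableEq X] [DecidableEq Y]
    (A : Matrix X Y ℝ) (r : ℕ) :
    ∃ (q : X → Fin r → ℝ) (k : Y → Fin r → ℝ),
      (Matrix.of fun x y => ∑ i, q x i * k y i).rank ≤ r ∧
      ∀ B : Matrix X Y ℝ, B.rank ≤ r →
        Real.sqrt (∑ x, ∑ y, (A x y - ∑ i, q x i * k y i) ^ 2)
          ≤ Real.sqrt (∑ x, ∑ y, (A x y - B x y) ^ 2) :=
  eckart_young_dot_product_form_general A r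
end
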